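/- arXiv:0711.3764 — 6 statements merged into one kernel-verified Lean document; each statement's English description precedes it below -/
import Mathlib

section
/- Let α be a probability measure on a measurable space S and let u₀, u₁ : S → ℝ be bounded measurable functions. For j = 0, 1 let h_j = exp(u_j) / ∫ exp(u_j) dα be the density with respect to α of the tilted probability measure. Then for every real number B, ∫ |h₁ − h₀| dα ≤ 2 · exp( max(osc(u₀), osc(u₁)) ) · ∫ |u₁ − u₀ − B| dα. -/
open MeasureTheory Real

/-!
Tilting is unchanged by adding a constant to the exponent, so `u₁` may be replaced by
`v = u₁ - B`. Each tilted density `exp u / ∫ exp u` is at most `exp (osc u)`, its normaliser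
being at least `exp (inf u)`. For nonnegative `f, g` the normalisations `f / ∫ f` and `g / ∫ g`
are within `2 ∫ |f - g| / max (∫ f) (∫ g)` of each other in `L¹`, and dividing the mean value
bound `|exp a - exp b| ≤ exp (max a b) |a - b|` by the larger normaliser bounds that integrand
by `exp (max (osc u₀) (osc u₁)) |v - u₀|`.
-/

theorem abs_exp_sub_exp_le_exp_max_mul (a b : ℝ) :
    |exp a - exp b| ≤ exp (max a b) * |a - b| := by
  wlog hab : a ≤ b generalizing a b
  · simpa only [abs_sub_comm, max_comm] using this b a (le_of_not_ge hab)
  have hsplit : exp a = exp (a - b) * exp b := by rw [← exp_add, sub_add_cancel]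
  rw [max_eq_right hab, abs_of_nonpos (sub_nonpos.2 (exp_le_exp.2 hab)),
    abs_of_nonpos (sub_nonpos.2 hab), hsplit]
  nlinarith [add_one_le_exp (a - b), exp_pos b]

theorem abs_exp_sub_exp_div_max_le {a b Za Zb K : ℝ} (hZa : 0 < Za) (hZb : 0 < Zb)
    (ha : exp a / Za ≤ K) (hb : exp b / Zb ≤ K) :
    |exp a - exp b| / max Za Zb ≤ K * |a - b| := by
  have hZ : 0 < max Za Zb := lt_max_of_lt_left hZa
  have hK : 0 ≤ K := (div_nonneg (exp_pos a).le hZa.le).trans ha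
  have hmax : exp (max a b) / max Za Zb ≤ K := by
    rw [div_le_iff₀ hZ, exp_monotone.map_max]
    rw [div_le_iff₀ hZa] at ha
    rw [div_le_iff₀ hZb] at hb
    exact max_le (ha.trans (by gcongr; exact le_max_left _ _))
      (hb.trans (by gcongr; exact le_max_right _ _))
  calc |exp a - exp b| / max Za Zb ≤ exp (max a b) * |a - b| / max Za Zb := by
        gcongr; exact abs_exp_sub_exp_le_exp_max_mul a b
    _ = exp (max a b) / max Za Zb * |a - b| := by ring
    _ ≤ K * |a - b| := by gcongr

section

variable {S : Type*} [MeasurableSpace S] {μ : Measure S}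

theorem integral_abs_div_integral_sub_div_integral_le {f g : S → ℝ} (hf : Integrable f μ)
    (hg : Integrable g μ) (hg0 : ∀ᵐ x ∂μ, 0 ≤ g x) (hZf : 0 < ∫ x, f x ∂μ)
    (hZg : 0 < ∫ x, g x ∂μ) :
    ∫ x, |f x / (∫ y, f y ∂μ) - g x / (∫ y, g y ∂μ)| ∂μ
      ≤ 2 * ∫ x, |f x - g x| / (∫ y, f y ∂μ) ∂μ := by
  set Zf := ∫ y, f y ∂μ
  set Zg := ∫ y, g y ∂μ
  have hZ : |Zf - Zg| ≤ ∫ x, |f x - g x| ∂μ := by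
    rw [← integral_sub hf hg]; exact abs_integral_le_integral_abs
  have hdiff : Integrable (fun x => |f x - g x| / Zf) μ := (hf.sub hg).abs.div_const _
  have hpoint : ∀ᵐ x ∂μ,
      |f x / Zf - g x / Zg| ≤ |f x - g x| / Zf + g x / Zg * (|Zf - Zg| / Zf) := by
    filter_upwards [hg0] with x hgx
    have hsplit : f x / Zf - g x / Zg = (f x - g x) / Zf + g x / Zg * ((Zg - Zf) / Zf) := by
      field_simp; ring
    rw [hsplit]
    refine (abs_add_le _ _).trans_eq ?_
    rw [abs_div, abs_mul, abs_of_nonneg (div_nonneg hgx hZg.le), abs_div, abs_of_pos hZf,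
      abs_sub_comm Zg Zf]
  calc ∫ x, |f x / Zf - g x / Zg| ∂μ
      ≤ ∫ x, (|f x - g x| / Zf + g x / Zg * (|Zf - Zg| / Zf)) ∂μ :=
        integral_mono_of_nonneg (ae_of_all _ fun _ => abs_nonneg _)
          (hdiff.add ((hg.div_const _).mul_const _)) hpoint
    _ = ∫ x, |f x - g x| / Zf ∂μ + |Zf - Zg| / Zf := by
        rw [integral_add hdiff ((hg.div_const _).mul_const _), integral_mul_const,
          integral_div, integral_div, div_self hZg.ne', one_mul]
    _ ≤ 2 * ∫ x, |f x - g x| / Zf ∂μ := by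
        rw [integral_div, two_mul]; gcongr

theorem integral_abs_div_integral_sub_div_integral_le_max {f g : S → ℝ} (hf : Integrable f μ)
    (hg : Integrable g μ) (hf0 : ∀ᵐ x ∂μ, 0 ≤ f x) (hg0 : ∀ᵐ x ∂μ, 0 ≤ g x)
    (hZf : 0 < ∫ x, f x ∂μ) (hZg : 0 < ∫ x, g x ∂μ) :
    ∫ x, |f x / (∫ y, f y ∂μ) - g x / (∫ y, g y ∂μ)| ∂μ
      ≤ 2 * ∫ x, |f x - g x| / max (∫ y, f y ∂μ) (∫ y, g y ∂μ) ∂μ := by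
  rcases le_total (∫ y, g y ∂μ) (∫ y, f y ∂μ) with hle | hle
  · rw [max_eq_left hle]
    exact integral_abs_div_integral_sub_div_integral_le hf hg hg0 hZf hZg
  · rw [max_eq_right hle]
    simpa only [abs_sub_comm] using
      integral_abs_div_integral_sub_div_integral_le hg hf hf0 hZg hZf

theorem integrable_exp_of_le [IsFiniteMeasure μ] {u : S → ℝ} (hu : Measurable u) {C : ℝ}
    (hC : ∀ x, u x ≤ C) : Integrable (fun x => exp (u x)) μ :=
  .of_bound hu.exp.aestronglyMeasurable (exp C) <| ae_of_all _ fun x => by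
    rw [norm_of_nonneg (exp_pos _).le]; exact exp_le_exp.2 (hC x)

theorem exp_div_integral_exp_le_exp_sup_sub_inf [IsProbabilityMeasure μ] {u : S → ℝ}
    (hu : Measurable u) (hA : BddAbove (Set.range u)) (hB : BddBelow (Set.range u)) (x : S) :
    exp (u x) / ∫ y, exp (u y) ∂μ ≤ exp ((⨆ y, u y) - ⨅ y, u y) := by
  have hZ : exp (⨅ y, u y) ≤ ∫ y, exp (u y) ∂μ := by
    simpa using integral_mono (μ := μ) (integrable_const _)
      (integrable_exp_of_le hu (le_ciSup hA))
      fun y => exp_le_exp.2 (ciInf_le hB y)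
  rw [exp_sub]
  exact div_le_div₀ (exp_pos _).le (exp_le_exp.2 (le_ciSup hA x)) (exp_pos _) hZ

theorem exp_sub_div_integral_exp_sub (u : S → ℝ) (B : ℝ) (x : S) :
    exp (u x - B) / ∫ y, exp (u y - B) ∂μ = exp (u x) / ∫ y, exp (u y) ∂μ := by
  simp only [exp_sub, integral_div]
  exact div_div_div_cancel_right₀ (exp_pos B).ne' _ _

theorem integral_abs_tilted_sub_tilted_le [NeZero μ] {v w : S → ℝ} {K : ℝ}
    (hv : Integrable (fun x => exp (v x)) μ) (hw : Integrable (fun x => exp (w x)) μ)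
    (hKv : ∀ x, exp (v x) / ∫ y, exp (v y) ∂μ ≤ K)
    (hKw : ∀ x, exp (w x) / ∫ y, exp (w y) ∂μ ≤ K)
    (hdev : Integrable (fun x => |v x - w x|) μ) :
    ∫ x, |exp (v x) / (∫ y, exp (v y) ∂μ) - exp (w x) / (∫ y, exp (w y) ∂μ)| ∂μ
      ≤ 2 * K * ∫ x, |v x - w x| ∂μ := calc
  _ ≤ 2 * ∫ x, |exp (v x) - exp (w x)|
        / max (∫ y, exp (v y) ∂μ) (∫ y, exp (w y) ∂μ) ∂μ :=
    integral_abs_div_integral_sub_div_integral_le_max hv hw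
      (ae_of_all _ fun _ => (exp_pos _).le) (ae_of_all _ fun _ => (exp_pos _).le)
      (integral_exp_pos hv) (integral_exp_pos hw)
  _ ≤ 2 * ∫ x, K * |v x - w x| ∂μ := by
    refine mul_le_mul_of_nonneg_left (integral_mono_of_nonneg
      (ae_of_all _ fun _ => by positivity) (hdev.const_mul _) (ae_of_all _ fun x => ?_)) two_pos.le
    exact abs_exp_sub_exp_div_max_le (integral_exp_pos hv) (integral_exp_pos hw) (hKv x) (hKw x)
  _ = 2 * K * ∫ x, |v x - w x| ∂μ := by rw [integral_const_mul, mul_assoc]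

end

/-- Linear-deviation tilting estimate: for two bounded measurable functions `u₀, u₁` on a
probability space `(S, α)`, the total variation distance between the exponentially tilted
probability densities `h_j = exp(u_j)/∫ exp(u_j) dα` is bounded, for every `B : ℝ`, by
`2 · exp(max(osc u₀, osc u₁)) · ∫ |u₁ − u₀ − B| dα`. -/
theorem tilted_density_L1_dist_le_linear_deviation
    {S : Type*} [MeasurableSpace S] (α : Measure S) [IsProbabilityMeasure α]
    (u₀ u₁ : S → ℝ) (hm₀ : Measurable u₀) (hm₁ : Measurable u₁)
    (C₀ : ℝ) (hb₀ : ∀ x, |u₀ x| ≤ C₀) (C₁ : ℝ) (hb₁ : ∀ x, |u₁ x| ≤ C₁)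
    (B : ℝ) :
    ∫ σ, |Real.exp (u₁ σ) / (∫ τ, Real.exp (u₁ τ) ∂α)
          - Real.exp (u₀ σ) / (∫ τ, Real.exp (u₀ τ) ∂α)| ∂α
      ≤ 2 * Real.exp (max ((⨆ x, u₀ x) - ⨅ x, u₀ x) ((⨆ x, u₁ x) - ⨅ x, u₁ x))
          * ∫ σ, |u₁ σ - u₀ σ - B| ∂α := by
  have hbdd {u : S → ℝ} {C : ℝ} (h : ∀ x, |u x| ≤ C) :
      BddAbove (Set.range u) ∧ BddBelow (Set.range u) :=
    ⟨⟨C, Set.forall_mem_range.2 fun x => (abs_le.1 (h x)).2⟩,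
      ⟨-C, Set.forall_mem_range.2 fun x => (abs_le.1 (h x)).1⟩⟩
  have hint₀ : Integrable (fun x => exp (u₀ x)) α :=
    integrable_exp_of_le hm₀ fun x => (abs_le.1 (hb₀ x)).2
  have hint₁ : Integrable (fun x => exp (u₁ x - B)) α :=
    integrable_exp_of_le (hm₁.sub_const B) fun x => sub_le_sub_right (abs_le.1 (hb₁ x)).2 B
  have hdev : Integrable (fun x => |u₁ x - B - u₀ x|) α :=
    (((Integrable.of_bound hm₁.aestronglyMeasurable C₁ (ae_of_all _ hb₁)).sub
      (integrable_const B)).sub (.of_bound hm₀.aestronglyMeasurable C₀ (ae_of_all _ hb₀))).abs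
  have hK₀ (x : S) := (exp_div_integral_exp_le_exp_sup_sub_inf (μ := α) hm₀
    (hbdd hb₀).1 (hbdd hb₀).2 x).trans
      (exp_le_exp.2 (le_max_left _ ((⨆ x, u₁ x) - ⨅ x, u₁ x)))
  have hK₁ (x : S) := (exp_sub_div_integral_exp_sub (μ := α) u₁ B x).trans_le <|
    (exp_div_integral_exp_le_exp_sup_sub_inf hm₁ (hbdd hb₁).1 (hbdd hb₁).2 x).trans
      (exp_le_exp.2 (le_max_right ((⨆ x, u₀ x) - ⨅ x, u₀ x) _))
  simpa only [exp_sub_div_integral_exp_sub, sub_right_comm] using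
    integral_abs_tilted_sub_tilted_le hint₁ hint₀ hK₁ hK₀ hdev
end

section
/- Let α be a probability measure on a measurable space S and let u₀, u₁ : S → ℝ be bounded measurable functions. For j = 0, 1 let h_j = exp(u_j) / ∫ exp(u_j) dα be the density with respect to α of the tilted probability measure. Then for every real number B, ∫ |h₁ − h₀| dα ≤ exp( max(osc(u₀), osc(u₁)) / 2 ) · ( ∫ (u₁ − u₀ − B)² dα )^{1/2}. -/
/-!
Interpolate `u_t = u₀ + t (u₁ - u₀)` and let `P_t` be the measure tilted by `u_t`. Testing against
the sign `s` of `h₁ - h₀` gives `∫ |h₁ - h₀| dα = F 1 - F 0` with `F t = ∫ s dP_t`. The derivative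
of `F` is the covariance of `s` and `d = u₁ - u₀` under `P_t`, which is at most the mean absolute
deviation of `d`, hence at most `(∫ (d - B)² dP_t)^{1/2}` for every `B`. The oscillation of `u_t` is
at most `M = max (osc u₀) (osc u₁)`, so the density of `P_t` is at most `exp M`, which produces the
factor `exp (M / 2)`; the mean value theorem concludes.
-/

open MeasureTheory ProbabilityTheory Real Set

theorem sub_le_iSup_sub_iInf {S : Type*} {u : S → ℝ} {C : ℝ} (hC : ∀ x, |u x| ≤ C) (x y : S) :
    u x - u y ≤ (⨆ z, u z) - ⨅ z, u z :=
  sub_le_sub (le_ciSup ⟨C, forall_mem_range.2 fun z => (abs_le.1 (hC z)).2⟩ x)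
    (ciInf_le ⟨-C, forall_mem_range.2 fun z => (abs_le.1 (hC z)).1⟩ y)

theorem interpolate_sub_le {S : Type*} {u₀ u₁ : S → ℝ} {M t : ℝ}
    (h₀ : ∀ x y, u₀ x - u₀ y ≤ M) (h₁ : ∀ x y, u₁ x - u₁ y ≤ M) (ht : t ∈ Icc (0 : ℝ) 1)
    (x y : S) : (u₀ x + t * (u₁ x - u₀ x)) - (u₀ y + t * (u₁ y - u₀ y)) ≤ M := by
  nlinarith [mul_le_mul_of_nonneg_left (h₀ x y) (sub_nonneg.2 ht.2),
    mul_le_mul_of_nonneg_left (h₁ x y) ht.1]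

section
variable {S : Type*} [MeasurableSpace S] {μ : Measure S}

theorem integrable_mul_exp_mul {g X : S → ℝ} {C : ℝ} (hg : Integrable g μ)
    (hX : AEStronglyMeasurable X μ) (hXC : ∀ x, |X x| ≤ C) (t : ℝ) :
    Integrable (fun x => g x * exp (t * X x)) μ :=
  hg.mul_bdd (continuous_exp.comp_aestronglyMeasurable (hX.const_mul t)) <| .of_forall fun x =>
    (Real.norm_of_nonneg (exp_pos _).le).trans_le <| exp_le_exp.2 <| (le_abs_self _).trans <| by
      rw [abs_mul]; exact mul_le_mul_of_nonneg_left (hXC x) (abs_nonneg t)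

theorem hasDerivAt_integral_mul_exp_mul {g X : S → ℝ} {C : ℝ} (hg : Integrable g μ)
    (hX : AEStronglyMeasurable X μ) (hXC : ∀ x, |X x| ≤ C) (t : ℝ) :
    HasDerivAt (fun t => ∫ x, g x * exp (t * X x) ∂μ)
      (∫ x, g x * X x * exp (t * X x) ∂μ) t := by
  have hexp (s : ℝ) : AEStronglyMeasurable (fun x => exp (s * X x)) μ :=
    continuous_exp.comp_aestronglyMeasurable (hX.const_mul s)
  have hexp_le (s : ℝ) (x : S) : exp (s * X x) ≤ exp (|s| * C) :=
    exp_le_exp.2 <| (le_abs_self _).trans <| by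
      rw [abs_mul]; exact mul_le_mul_of_nonneg_left (hXC x) (abs_nonneg s)
  refine (hasDerivAt_integral_of_dominated_loc_of_deriv_le
    (F := fun s x => g x * exp (s * X x)) (F' := fun s x => g x * X x * exp (s * X x))
    (bound := fun x => |g x| * (C * exp ((|t| + 1) * C)))
    (Metric.ball_mem_nhds t one_pos) (.of_forall fun s => hg.aestronglyMeasurable.mul (hexp s))
    (hg.mul_bdd (hexp t) (.of_forall fun x =>
      (Real.norm_of_nonneg (exp_pos _).le).trans_le (hexp_le t x)))
    ((hg.aestronglyMeasurable.mul hX).mul (hexp t)) (.of_forall fun x s hs => ?_)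
    (hg.abs.mul_const _) (.of_forall fun x s _ => ?_)).2
  · have hs' : |s| ≤ |t| + 1 := by
      have := abs_sub_abs_le_abs_sub s t
      rw [Metric.mem_ball, Real.dist_eq] at hs
      linarith
    rw [norm_mul, norm_mul, mul_assoc, Real.norm_eq_abs, Real.norm_eq_abs,
      Real.norm_of_nonneg (exp_pos _).le]
    have hC : 0 ≤ C := (abs_nonneg _).trans (hXC x)
    exact mul_le_mul_of_nonneg_left (mul_le_mul (hXC x)
      ((hexp_le s x).trans (exp_le_exp.2 (mul_le_mul_of_nonneg_right hs' hC)))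
      (exp_pos _).le hC) (abs_nonneg _)
  · exact ((hasDerivAt_mul_const (X x)).exp.const_mul (g x)).congr_deriv (by ring)

theorem integral_tilted_mul_eq (X f : S → ℝ) (t : ℝ) :
    ∫ x, f x ∂μ.tilted (fun x => t * X x)
      = (∫ x, f x * exp (t * X x) ∂μ) / ∫ x, exp (t * X x) ∂μ := by
  rw [integral_tilted, ← integral_div]
  congr with x
  rw [smul_eq_mul]; ring

theorem hasDerivAt_integral_tilted_mul [IsFiniteMeasure μ] [NeZero μ] {g X : S → ℝ} {C D : ℝ}
    (hg : AEStronglyMeasurable g μ) (hgD : ∀ x, |g x| ≤ D)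
    (hX : AEStronglyMeasurable X μ) (hXC : ∀ x, |X x| ≤ C) (t : ℝ) :
    HasDerivAt (fun t => ∫ x, g x ∂μ.tilted (fun x => t * X x))
      (∫ x, g x * (X x - ∫ y, X y ∂μ.tilted (fun y => t * X y)) ∂μ.tilted (fun x => t * X x))
      t := by
  have hg_int : Integrable g μ := .of_bound hg D (.of_forall hgD)
  have hgX_int : Integrable (fun x => g x * X x) μ :=
    hg_int.mul_bdd hX (.of_forall hXC)
  have hZ : HasDerivAt (fun t => ∫ x, exp (t * X x) ∂μ) (∫ x, X x * exp (t * X x) ∂μ) t := by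
    simpa using hasDerivAt_integral_mul_exp_mul (integrable_const (1 : ℝ)) hX hXC t
  have hZ_pos : 0 < ∫ x, exp (t * X x) ∂μ :=
    integral_exp_pos (by simpa using integrable_mul_exp_mul (integrable_const (1 : ℝ)) hX hXC t)
  have hcov : ∫ x, g x * (X x - (∫ y, X y * exp (t * X y) ∂μ) / ∫ y, exp (t * X y) ∂μ)
        * exp (t * X x) ∂μ
      = ∫ x, g x * X x * exp (t * X x) ∂μ
        - (∫ y, X y * exp (t * X y) ∂μ) / (∫ y, exp (t * X y) ∂μ)
          * ∫ x, g x * exp (t * X x) ∂μ := by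
    rw [← integral_const_mul, ← integral_sub (integrable_mul_exp_mul hgX_int hX hXC t)
      ((integrable_mul_exp_mul hg_int hX hXC t).const_mul _)]
    congr with x
    ring
  simp_rw [integral_tilted_mul_eq, hcov]
  refine ((hasDerivAt_integral_mul_exp_mul hg_int hX hXC t).div hZ hZ_pos.ne').congr_deriv ?_
  generalize ∫ x, exp (t * X x) ∂μ = Z at hZ_pos ⊢
  generalize ∫ x, g x * X x * exp (t * X x) ∂μ = A
  field_simp

theorem integral_abs_sub_integral_le_sqrt [IsProbabilityMeasure μ] {v : S → ℝ} (hv : MemLp v 2 μ)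
    (B : ℝ) : ∫ x, |v x - ∫ y, v y ∂μ| ∂μ ≤ √(∫ x, (v x - B) ^ 2 ∂μ) := by
  set c := ∫ y, v y ∂μ
  have hdev : MemLp (fun x => |v x - c|) 2 μ := (hv.sub (memLp_const c)).abs
  refine le_sqrt_of_sq_le ?_
  calc (∫ x, |v x - c| ∂μ) ^ 2 ≤ ∫ x, |v x - c| ^ 2 ∂μ := by
        have := variance_eq_sub hdev
        simp only [Pi.pow_apply] at this
        linarith [variance_nonneg (fun x => |v x - c|) μ]
    _ = Var[v; μ] := by simp only [sq_abs, variance_eq_integral hv.aemeasurable, c]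
    _ = Var[fun x => v x - B; μ] := (variance_sub_const hv.aestronglyMeasurable B).symm
    _ ≤ ∫ x, (v x - B) ^ 2 ∂μ :=
        variance_le_expectation_sq (hv.aestronglyMeasurable.sub aestronglyMeasurable_const)

theorem abs_integral_mul_sub_integral_le_sqrt [IsProbabilityMeasure μ] {g v : S → ℝ}
    (hg1 : ∀ x, |g x| ≤ 1) (hv : MemLp v 2 μ) (B : ℝ) :
    |∫ x, g x * (v x - ∫ y, v y ∂μ) ∂μ| ≤ √(∫ x, (v x - B) ^ 2 ∂μ) := by
  refine (norm_integral_le_of_norm_le (f := fun x => g x * (v x - ∫ y, v y ∂μ))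
    ((hv.integrable one_le_two).sub (integrable_const (∫ y, v y ∂μ))).abs
    (.of_forall fun x => ?_)).trans (integral_abs_sub_integral_le_sqrt hv B)
  rw [Real.norm_eq_abs, abs_mul]
  exact mul_le_of_le_one_left (abs_nonneg _) (hg1 x)

theorem exists_integral_abs_sub_eq {f g : S → ℝ} (hfm : Measurable f) (hgm : Measurable g)
    (hf : Integrable f μ) (hg : Integrable g μ) :
    ∃ s : S → ℝ, Measurable s ∧ (∀ x, |s x| ≤ 1) ∧
      ∫ x, |f x - g x| ∂μ = ∫ x, f x * s x ∂μ - ∫ x, g x * s x ∂μ := by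
  set s : S → ℝ := fun x => if g x ≤ f x then 1 else -1
  have hsm : Measurable s := .ite (measurableSet_le hgm hfm) measurable_const measurable_const
  have hs1 (x : S) : |s x| ≤ 1 := by simp only [s]; split_ifs <;> simp
  refine ⟨s, hsm, hs1, ?_⟩
  rw [← integral_sub (hf.mul_bdd hsm.aestronglyMeasurable (.of_forall hs1))
    (hg.mul_bdd hsm.aestronglyMeasurable (.of_forall hs1))]
  congr with x
  simp only [s]
  split_ifs with h
  · rw [abs_of_nonneg (sub_nonneg.2 h)]; ring
  · rw [abs_of_neg (sub_neg.2 (not_le.1 h))]; ring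

section Oscillation

variable [IsProbabilityMeasure μ] {u : S → ℝ} {M : ℝ}

theorem integrable_exp_of_sub_le (hu : AEStronglyMeasurable u μ) (huM : ∀ x y, u x - u y ≤ M) :
    Integrable (fun x => exp (u x)) μ := by
  obtain ⟨y⟩ := nonempty_of_isProbabilityMeasure μ
  refine .of_bound (continuous_exp.comp_aestronglyMeasurable hu) (exp (M + u y))
    (.of_forall fun x => ?_)
  rw [Real.norm_of_nonneg (exp_pos _).le, exp_le_exp]
  linarith [huM x y]

theorem exp_div_integral_exp_le (hu : AEStronglyMeasurable u μ) (huM : ∀ x y, u x - u y ≤ M)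
    (x : S) : exp (u x) / ∫ y, exp (u y) ∂μ ≤ exp M := by
  have hZ : exp (u x - M) ≤ ∫ y, exp (u y) ∂μ := by
    calc exp (u x - M) = ∫ _y, exp (u x - M) ∂μ := by simp
      _ ≤ ∫ y, exp (u y) ∂μ := integral_mono (integrable_const _)
          (integrable_exp_of_sub_le hu huM) fun y => exp_le_exp.2 (by linarith [huM x y])
  rw [div_le_iff₀ ((exp_pos _).trans_le hZ)]
  calc exp (u x) = exp M * exp (u x - M) := by rw [← exp_add, add_sub_cancel]
    _ ≤ exp M * ∫ y, exp (u y) ∂μ := by gcongr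

theorem integral_tilted_le_exp_mul (hu : AEStronglyMeasurable u μ) (huM : ∀ x y, u x - u y ≤ M)
    {f : S → ℝ} (hf : Integrable f μ) (hf0 : ∀ x, 0 ≤ f x) :
    ∫ x, f x ∂μ.tilted u ≤ exp M * ∫ x, f x ∂μ := by
  rw [integral_tilted, ← integral_const_mul]
  refine integral_mono_of_nonneg (.of_forall fun x => ?_) (hf.const_mul _) (.of_forall fun x => ?_)
  · exact smul_nonneg (div_nonneg (exp_pos _).le (integral_nonneg fun y => (exp_pos _).le)) (hf0 x)
  · exact mul_le_mul_of_nonneg_right (exp_div_integral_exp_le hu huM x) (hf0 x)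

theorem abs_integral_tilted_mul_sub_le (hu : AEStronglyMeasurable u μ)
    (huM : ∀ x y, u x - u y ≤ M) {g v : S → ℝ} {C : ℝ}
    (hg1 : ∀ x, |g x| ≤ 1) (hv : AEStronglyMeasurable v μ) (hvC : ∀ x, |v x| ≤ C) (B : ℝ) :
    |∫ x, g x * (v x - ∫ y, v y ∂μ.tilted u) ∂μ.tilted u|
      ≤ exp (M / 2) * √(∫ x, (v x - B) ^ 2 ∂μ) := by
  have := isProbabilityMeasure_tilted (integrable_exp_of_sub_le hu huM)
  have hac := tilted_absolutelyContinuous μ u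
  have hvB : ∀ x, ‖(v x - B) ^ 2‖ ≤ (C + |B|) ^ 2 := fun x => by
    rw [Real.norm_eq_abs, abs_pow]
    exact pow_le_pow_left₀ (abs_nonneg _) ((abs_sub _ _).trans (add_le_add_left (hvC x) _)) 2
  calc _ ≤ √(∫ x, (v x - B) ^ 2 ∂μ.tilted u) :=
        abs_integral_mul_sub_integral_le_sqrt hg1
          (.of_bound (hv.mono_ac hac) C (.of_forall hvC)) B
    _ ≤ √(exp M * ∫ x, (v x - B) ^ 2 ∂μ) := by
        gcongr
        exact integral_tilted_le_exp_mul hu huM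
          (.of_bound ((hv.sub aestronglyMeasurable_const).pow 2) _ (.of_forall hvB))
          fun x => sq_nonneg _
    _ = exp (M / 2) * √(∫ x, (v x - B) ^ 2 ∂μ) := by rw [sqrt_mul (exp_pos _).le, exp_half]

theorem abs_integral_tilted_sub_integral_tilted_le {u₀ u₁ g : S → ℝ} {C : ℝ}
    (hu₀ : AEStronglyMeasurable u₀ μ) (hu₁ : AEStronglyMeasurable u₁ μ)
    (h₀ : ∀ x y, u₀ x - u₀ y ≤ M) (h₁ : ∀ x y, u₁ x - u₁ y ≤ M) (hC : ∀ x, |u₁ x - u₀ x| ≤ C)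
    (hg : AEStronglyMeasurable g μ) (hg1 : ∀ x, |g x| ≤ 1) (B : ℝ) :
    |∫ x, g x ∂μ.tilted u₁ - ∫ x, g x ∂μ.tilted u₀|
      ≤ exp (M / 2) * √(∫ x, (u₁ x - u₀ x - B) ^ 2 ∂μ) := by
  set d : S → ℝ := fun x => u₁ x - u₀ x
  have hd : AEStronglyMeasurable d μ := hu₁.sub hu₀
  have hexp₀ := integrable_exp_of_sub_le hu₀ h₀
  have := isProbabilityMeasure_tilted hexp₀
  have hac := tilted_absolutelyContinuous μ u₀
  have hpath (t : ℝ) : (μ.tilted u₀).tilted (fun x => t * d x)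
      = μ.tilted (fun x => u₀ x + t * d x) := tilted_tilted hexp₀ _
  have hF (t : ℝ) := hasDerivAt_integral_tilted_mul (hg.mono_ac hac) hg1 (hd.mono_ac hac) hC t
  have hF_sub := norm_image_sub_le_of_norm_deriv_le_segment_01'
    (fun t _ => (hF t).hasDerivWithinAt) fun t ht => by
      rw [Real.norm_eq_abs, hpath]
      exact abs_integral_tilted_mul_sub_le (hu₀.add (hd.const_mul t))
        (interpolate_sub_le h₀ h₁ (Ico_subset_Icc_self ht)) hg1 hd hC B
  simp only [hpath] at hF_sub
  simpa [d] using hF_sub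

end Oscillation

end

/-- Quadratic (Cauchy–Schwarz) tilting estimate: for two bounded measurable functions
`u₀, u₁` on a probability space `(S, α)`, the total variation distance between the
exponentially tilted probability densities `h_j = exp(u_j)/∫ exp(u_j) dα` is bounded,
for every `B : ℝ`, by `exp(max(osc u₀, osc u₁)/2) · (∫ (u₁ − u₀ − B)² dα)^{1/2}`. -/
theorem tilted_density_L1_dist_le_quadratic_deviation
    {S : Type*} [MeasurableSpace S] (α : Measure S) [IsProbabilityMeasure α]
    (u₀ u₁ : S → ℝ) (hm₀ : Measurable u₀) (hm₁ : Measurable u₁)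
    (C₀ : ℝ) (hb₀ : ∀ x, |u₀ x| ≤ C₀) (C₁ : ℝ) (hb₁ : ∀ x, |u₁ x| ≤ C₁)
    (B : ℝ) :
    ∫ σ, |Real.exp (u₁ σ) / (∫ τ, Real.exp (u₁ τ) ∂α)
          - Real.exp (u₀ σ) / (∫ τ, Real.exp (u₀ τ) ∂α)| ∂α
      ≤ Real.exp (max ((⨆ x, u₀ x) - ⨅ x, u₀ x) ((⨆ x, u₁ x) - ⨅ x, u₁ x) / 2)
          * (∫ σ, (u₁ σ - u₀ σ - B) ^ 2 ∂α) ^ ((1 : ℝ) / 2) := by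
  set M := max ((⨆ x, u₀ x) - ⨅ x, u₀ x) ((⨆ x, u₁ x) - ⨅ x, u₁ x)
  have h₀ : ∀ x y, u₀ x - u₀ y ≤ M := fun x y =>
    (sub_le_iSup_sub_iInf hb₀ x y).trans (le_max_left _ _)
  have h₁ : ∀ x y, u₁ x - u₁ y ≤ M := fun x y =>
    (sub_le_iSup_sub_iInf hb₁ x y).trans (le_max_right _ _)
  have hexp₀ := integrable_exp_of_sub_le (μ := α) hm₀.aestronglyMeasurable h₀
  have hexp₁ := integrable_exp_of_sub_le (μ := α) hm₁.aestronglyMeasurable h₁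
  obtain ⟨s, hs, hs1, hL1⟩ := exists_integral_abs_sub_eq (μ := α)
    (f := fun x => exp (u₁ x) / ∫ y, exp (u₁ y) ∂α) (g := fun x => exp (u₀ x) / ∫ y, exp (u₀ y) ∂α)
    (hm₁.exp.div_const _) (hm₀.exp.div_const _) (hexp₁.div_const _) (hexp₀.div_const _)
  have key := abs_integral_tilted_sub_integral_tilted_le (μ := α) hm₀.aestronglyMeasurable
    hm₁.aestronglyMeasurable h₀ h₁ (fun x => (abs_sub _ _).trans (add_le_add (hb₁ x) (hb₀ x)))
    hs.aestronglyMeasurable hs1 B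
  simp only [integral_tilted, smul_eq_mul] at key
  rw [← sqrt_eq_rpow, hL1]
  exact (le_abs_self _).trans key
end

section
/- Let α be a probability measure on a measurable space S, let M ≥ 0, and let h : S → ℝ be a nonnegative measurable function with ∫ h dα = 1 and h ≤ M pointwise. Let λ be the probability measure with density h with respect to α, and let F : S → ℝ be bounded measurable. Then for every real number B, ∫ |F − ∫ F dλ| dλ ≤ 2 · M · ∫ |F − B| dα. -/
/-!
Under any probability measure `μ`, the mean is within `∫ |F - B| dμ` of every constant `B`, so
the triangle inequality gives `∫ |F - μ(F)| dμ ≤ 2 ∫ |F - B| dμ`. For `λ = h·α` with `h ≤ M` one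
has `λ ≤ M • α` as measures, which turns the `λ`-integral of `|F - B|` into `M` times its
`α`-integral.
-/

open MeasureTheory

section

variable {S : Type*} [MeasurableSpace S]

theorem integral_abs_sub_integral_le_two_mul_integral_abs_sub (μ : Measure S)
    [IsProbabilityMeasure μ] {F : S → ℝ} (hF : Integrable F μ) (B : ℝ) :
    ∫ x, |F x - ∫ y, F y ∂μ| ∂μ ≤ 2 * ∫ x, |F x - B| ∂μ := by
  set m := ∫ y, F y ∂μ
  have hFB : Integrable (fun x => |F x - B|) μ := (hF.sub (integrable_const B)).abs
  have hmean : |B - m| ≤ ∫ x, |F x - B| ∂μ :=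
    calc |B - m| = |∫ x, (B - F x) ∂μ| := by
          rw [integral_sub (integrable_const B) hF]; simp [m]
      _ ≤ ∫ x, |B - F x| ∂μ := abs_integral_le_integral_abs
      _ = ∫ x, |F x - B| ∂μ := by simp_rw [abs_sub_comm]
  calc ∫ x, |F x - m| ∂μ ≤ ∫ x, (|F x - B| + |B - m|) ∂μ :=
        integral_mono (hF.sub (integrable_const m)).abs (hFB.add (integrable_const _))
          fun x => abs_sub_le (F x) B m
    _ = ∫ x, |F x - B| ∂μ + |B - m| := by rw [integral_add hFB (integrable_const _)]; simp
    _ ≤ 2 * ∫ x, |F x - B| ∂μ := by linarith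

theorem isProbabilityMeasure_withDensity_ofReal {μ : Measure S} {h : S → ℝ}
    (hh0 : 0 ≤ᵐ[μ] h) (hnorm : ∫ x, h x ∂μ = 1) :
    IsProbabilityMeasure (μ.withDensity fun x => ENNReal.ofReal (h x)) := by
  -- the Bochner integral of a non-integrable function is `0`
  have hint : Integrable h μ := .of_integral_ne_zero (by simp [hnorm])
  constructor
  rw [withDensity_apply _ MeasurableSet.univ, setLIntegral_univ,
    ← ofReal_integral_eq_lintegral_ofReal hint hh0, hnorm, ENNReal.ofReal_one]

theorem withDensity_ofReal_le_smul {μ : Measure S} {h : S → ℝ} {M : ℝ}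
    (hhM : ∀ᵐ x ∂μ, h x ≤ M) :
    μ.withDensity (fun x => ENNReal.ofReal (h x)) ≤ ENNReal.ofReal M • μ := by
  rw [← withDensity_const]
  exact withDensity_mono (hhM.mono fun x hx => ENNReal.ofReal_le_ofReal hx)

theorem integral_le_mul_integral_of_le_smul {μ ν : Measure S} {c : ℝ} (hc : 0 ≤ c)
    (hle : μ ≤ ENNReal.ofReal c • ν) {f : S → ℝ} (hf0 : 0 ≤ᵐ[ν] f) (hf : Integrable f ν) :
    ∫ x, f x ∂μ ≤ c * ∫ x, f x ∂ν :=
  calc ∫ x, f x ∂μ ≤ ∫ x, f x ∂(ENNReal.ofReal c • ν) :=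
        integral_mono_measure hle (Measure.ae_smul_measure hf0 _)
          (hf.smul_measure ENNReal.ofReal_ne_top)
    _ = c * ∫ x, f x ∂ν := by rw [integral_smul_measure, ENNReal.toReal_ofReal hc, smul_eq_mul]

end

theorem mean_abs_deviation_le_of_density_le_general
    {S : Type*} [MeasurableSpace S] (α : Measure S) [IsProbabilityMeasure α]
    (M : ℝ) (hM : 0 ≤ M)
    (h : S → ℝ) (hh0 : ∀ x, 0 ≤ h x)
    (hnorm : ∫ x, h x ∂α = 1) (hhM : ∀ x, h x ≤ M)
    (F : S → ℝ) (hmF : Measurable F) (CF : ℝ) (hbF : ∀ x, |F x| ≤ CF)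
    (B : ℝ) :
    (∫ x, |F x - ∫ y, F y ∂(α.withDensity (fun z => ENNReal.ofReal (h z)))|
        ∂(α.withDensity (fun z => ENNReal.ofReal (h z))))
      ≤ 2 * M * ∫ x, |F x - B| ∂α := by
  set lam := α.withDensity (fun z => ENNReal.ofReal (h z))
  have : IsProbabilityMeasure lam :=
    isProbabilityMeasure_withDensity_ofReal (.of_forall hh0) hnorm
  have hle : lam ≤ ENNReal.ofReal M • α := withDensity_ofReal_le_smul (.of_forall hhM)
  have hFα : Integrable F α := .of_bound hmF.aestronglyMeasurable CF (.of_forall hbF)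
  have hFlam : Integrable F lam := (hFα.smul_measure ENNReal.ofReal_ne_top).mono_measure hle
  calc ∫ x, |F x - ∫ y, F y ∂lam| ∂lam ≤ 2 * ∫ x, |F x - B| ∂lam :=
        integral_abs_sub_integral_le_two_mul_integral_abs_sub lam hFlam B
    _ ≤ 2 * (M * ∫ x, |F x - B| ∂α) := by
        gcongr
        exact integral_le_mul_integral_of_le_smul hM hle (.of_forall fun x => abs_nonneg _)
          (hFα.sub (integrable_const B)).abs
    _ = 2 * M * ∫ x, |F x - B| ∂α := by ring

/-- Mean absolute deviation under a measure with bounded density: if `h ≥ 0` is a probability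
density w.r.t. `α` with `h ≤ M`, `λ = h·α`, and `F` is bounded measurable, then for every
`B : ℝ`, `∫ |F − λ(F)| dλ ≤ 2 M ∫ |F − B| dα`. -/
theorem mean_abs_deviation_le_of_density_le
    {S : Type*} [MeasurableSpace S] (α : Measure S) [IsProbabilityMeasure α]
    (M : ℝ) (hM : 0 ≤ M)
    (h : S → ℝ) (hmh : Measurable h) (hh0 : ∀ x, 0 ≤ h x)
    (hnorm : ∫ x, h x ∂α = 1) (hhM : ∀ x, h x ≤ M)
    (F : S → ℝ) (hmF : Measurable F) (CF : ℝ) (hbF : ∀ x, |F x| ≤ CF)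
    (B : ℝ) :
    (∫ x, |F x - ∫ y, F y ∂(α.withDensity (fun z => ENNReal.ofReal (h z)))|
        ∂(α.withDensity (fun z => ENNReal.ofReal (h z))))
      ≤ 2 * M * ∫ x, |F x - B| ∂α :=
  mean_abs_deviation_le_of_density_le_general α M hM h hh0 hnorm hhM F hmF CF hbF B
end

section
/- Let S be a measurable space, let ψ : S → ℝ be bounded measurable, and let κ and κ′ be probability measures on S. Define the tilted probability measures ν(g) = (∫ g·exp(ψ) dκ)/(∫ exp(ψ) dκ) and ν′(g) = (∫ g·exp(ψ) dκ′)/(∫ exp(ψ) dκ′). Then for every measurable g : S → ℝ with |g| ≤ 1 pointwise, |ν(g) − ν′(g)| ≤ 2 · exp(osc(ψ)) · ‖κ − κ′‖, where ‖κ − κ′‖ denotes the total variation norm sup over measurable f with |f| ≤ 1 of |∫ f dκ − ∫ f dκ′|. -/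
/-!
Write `ν(g) = A / B` and `ν'(g) = A' / B'`. Then
`A / B - A' / B' = ((A - A') + (A' / B') (B' - B)) / B` with `|A' / B'| ≤ 1`, both `A - A'` and
`B - B'` are differences of integrals of functions bounded by `exp (sup ψ)`, and `B ≥ exp (inf ψ)`.
-/

open MeasureTheory Real

theorem abs_div_sub_div_le {a b a' b' : ℝ} (hb : 0 < b) (hb' : 0 < b') (ha' : |a'| ≤ b') :
    |a / b - a' / b'| ≤ (|a - a'| + |b - b'|) / b := by
  have hratio : |a' / b'| ≤ 1 := by rwa [abs_div, abs_of_pos hb', div_le_one hb']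
  calc |a / b - a' / b'| = |(a - a') + a' / b' * (b' - b)| / b := by
        rw [eq_div_iff hb.ne', ← abs_of_pos hb, ← abs_mul, abs_of_pos hb]
        congr 1
        field_simp
        ring
    _ ≤ (|a - a'| + |b - b'|) / b := by
        gcongr
        refine (abs_add_le _ _).trans (add_le_add_right ?_ _)
        rw [abs_mul, abs_sub_comm]
        exact mul_le_of_le_one_left (abs_nonneg _) hratio

section TotalVariation

variable {S : Type*} [MeasurableSpace S]

/-- The total variation norm `‖κ - κ'‖`, normalized so that it ranges over `[0, 2]`
for probability measures. -/
noncomputable def tvDist (κ κ' : Measure S) : ℝ :=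
  ⨆ f : {f : S → ℝ // Measurable f ∧ ∀ x, |f x| ≤ 1},
    |∫ x, (f : S → ℝ) x ∂κ - ∫ x, (f : S → ℝ) x ∂κ'|

theorem abs_integral_mul_le_integral {μ : Measure S} {g w : S → ℝ}
    (hw : Integrable w μ) (hw0 : 0 ≤ w) (hg1 : ∀ x, |g x| ≤ 1) :
    |∫ x, g x * w x ∂μ| ≤ ∫ x, w x ∂μ :=
  norm_integral_le_of_norm_le (f := fun x => g x * w x) hw <| .of_forall fun x => by
    rw [norm_mul, norm_eq_abs, norm_eq_abs, abs_of_nonneg (hw0 x)]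
    exact mul_le_of_le_one_left (hw0 x) (hg1 x)

theorem le_integral_of_forall_le {μ : Measure S} [IsProbabilityMeasure μ]
    {f : S → ℝ} {c : ℝ} (hf : Integrable f μ) (hcf : ∀ x, c ≤ f x) :
    c ≤ ∫ x, f x ∂μ := by
  simpa using integral_mono (integrable_const c) hf hcf

variable (κ κ' : Measure S) [IsFiniteMeasure κ] [IsFiniteMeasure κ']

theorem abs_integral_sub_integral_le_tvDist {f : S → ℝ} (hf : Measurable f)
    (hf1 : ∀ x, |f x| ≤ 1) : |∫ x, f x ∂κ - ∫ x, f x ∂κ'| ≤ tvDist κ κ' := by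
  refine le_ciSup (f := fun u : {f : S → ℝ // Measurable f ∧ ∀ x, |f x| ≤ 1} =>
    |∫ x, (u : S → ℝ) x ∂κ - ∫ x, (u : S → ℝ) x ∂κ'|)
    ⟨κ.real Set.univ + κ'.real Set.univ, ?_⟩ ⟨f, hf, hf1⟩
  rintro _ ⟨⟨u, -, hu1⟩, rfl⟩
  have hu (μ : Measure S) [IsFiniteMeasure μ] : ‖∫ x, u x ∂μ‖ ≤ μ.real Set.univ := by
    simpa using norm_integral_le_of_norm_le_const (μ := μ) (C := 1) (f := u) (.of_forall hu1)
  exact (abs_sub _ _).trans (add_le_add (hu κ) (hu κ'))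

theorem tvDist_nonneg : 0 ≤ tvDist κ κ' := by
  simpa using abs_integral_sub_integral_le_tvDist κ κ' (f := 0) measurable_const (by simp)

theorem abs_integral_sub_integral_le_mul_tvDist {h : S → ℝ} {C : ℝ} (hC : 0 < C)
    (hh : Measurable h) (hhC : ∀ x, |h x| ≤ C) :
    |∫ x, h x ∂κ - ∫ x, h x ∂κ'| ≤ C * tvDist κ κ' := by
  have hscaled := abs_integral_sub_integral_le_tvDist κ κ' (hh.div_const C) fun x => by
    rw [abs_div, abs_of_pos hC]
    exact div_le_one_of_le₀ (hhC x) hC.le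
  rwa [integral_div, integral_div, ← sub_div, abs_div, abs_of_pos hC, div_le_iff₀' hC] at hscaled

end TotalVariation

/-- Comparison of two Gibbsian single-site measures with the same bounded Hamiltonian `ψ`
but different a priori measures `κ, κ′`: for every measurable `g` with `|g| ≤ 1`,
`|ν(g) − ν′(g)| ≤ 2 · exp(osc ψ) · ‖κ − κ′‖`, where `ν(g) = κ(g e^ψ)/κ(e^ψ)` and
`‖κ − κ′‖` is the sup over measurable `f` with `|f| ≤ 1` of `|κ(f) − κ′(f)|`. -/
theorem tilted_measure_dist_le_total_variation
    {S : Type*} [MeasurableSpace S] (κ κ' : Measure S)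
    [IsProbabilityMeasure κ] [IsProbabilityMeasure κ']
    (ψ : S → ℝ) (hmψ : Measurable ψ) (Cψ : ℝ) (hbψ : ∀ x, |ψ x| ≤ Cψ)
    (g : S → ℝ) (hmg : Measurable g) (hbg : ∀ x, |g x| ≤ 1) :
    |(∫ x, g x * Real.exp (ψ x) ∂κ) / (∫ x, Real.exp (ψ x) ∂κ)
      - (∫ x, g x * Real.exp (ψ x) ∂κ') / (∫ x, Real.exp (ψ x) ∂κ')|
      ≤ 2 * Real.exp ((⨆ x, ψ x) - ⨅ x, ψ x) *
          ⨆ f : {f : S → ℝ // Measurable f ∧ ∀ x, |f x| ≤ 1},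
            |∫ x, (f : S → ℝ) x ∂κ - ∫ x, (f : S → ℝ) x ∂κ'| := by
  have hbddA : BddAbove (Set.range ψ) := ⟨Cψ, by rintro _ ⟨x, rfl⟩; exact (abs_le.1 (hbψ x)).2⟩
  have hbddB : BddBelow (Set.range ψ) := ⟨-Cψ, by rintro _ ⟨x, rfl⟩; exact (abs_le.1 (hbψ x)).1⟩
  set M := exp (⨆ x, ψ x)
  set m := exp (⨅ x, ψ x)
  have hw : ∀ x, |exp (ψ x)| ≤ M := fun x => by
    rw [abs_of_pos (exp_pos _)]
    exact exp_le_exp.2 (le_ciSup hbddA x)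
  have hgw : ∀ x, |g x * exp (ψ x)| ≤ M := fun x => by
    rw [abs_mul]
    exact mul_le_of_le_one_left (abs_nonneg _) (hbg x) |>.trans (hw x)
  have hw_int (μ : Measure S) [IsProbabilityMeasure μ] : Integrable (fun x => exp (ψ x)) μ :=
    .of_bound hmψ.exp.aestronglyMeasurable M (.of_forall (hw ·))
  have hm_le (μ : Measure S) [IsProbabilityMeasure μ] : m ≤ ∫ x, exp (ψ x) ∂μ :=
    le_integral_of_forall_le (hw_int μ) fun x => exp_le_exp.2 (ciInf_le hbddB x)
  have hnum : |∫ x, g x * exp (ψ x) ∂κ'| ≤ ∫ x, exp (ψ x) ∂κ' :=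
    abs_integral_mul_le_integral (hw_int κ') (fun x => (exp_pos _).le) hbg
  calc _ ≤ _ := abs_div_sub_div_le ((exp_pos _).trans_le (hm_le κ))
          ((exp_pos _).trans_le (hm_le κ')) hnum
    _ ≤ (M * tvDist κ κ' + M * tvDist κ κ') / m := by
        have htv_nonneg := tvDist_nonneg κ κ'
        gcongr
        exacts [abs_integral_sub_integral_le_mul_tvDist κ κ' (exp_pos _) (hmg.mul hmψ.exp) hgw,
          abs_integral_sub_integral_le_mul_tvDist κ κ' (exp_pos _) hmψ.exp hw, hm_le κ]
    _ = 2 * exp ((⨆ x, ψ x) - ⨅ x, ψ x) * tvDist κ κ' := by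
        rw [exp_sub]
        ring
end

section
/- Let q ≥ 2 be an integer and let m ≥ 0 be an integer. Define the Legendre polynomial of degree n in dimension q for s ∈ (−1,1) by Rodrigues' formula P_n(q,s) = ((−1)^n · Γ((q−1)/2) / (2^n · Γ(n + (q−1)/2))) · (1 − s²)^{(3−q)/2} · (d/ds)^n [ (1 − s²)^{n + (q−3)/2} ]. Then ∫_{−1}^{0} P_{2m+1}(q,s) · (1 − s²)^{(q−3)/2} ds = (−1)^m · ∏_{i=0}^{m} ( (2i − 1) / (q + 2i − 1) ). -/
/-!
Put `w(s) = (1 - s²)^α` with `α = n + (q - 3)/2` and `n = 2m + 1`. The weight cancels the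
factor `(1 - s²)^{(3-q)/2}` of the Rodrigues formula, so the integral is the Rodrigues constant
times `∫_{-1}^0 w^{(n)} = w^{(n-1)}(0) - w^{(n-1)}(-1)`.

By Leibniz's rule for `(1 - s)^α (1 + s)^α`, every term of `w^{(j)}` carries a factor
`(1 + s)^{α - j + k}`; since `α > n - 1` these vanish at `-1` for `j = n - 1` and are integrable
for `j = n`.

The value at `0` comes from the equation `(1 - s²) w' = -2αs w`: differentiating it `k` times gives
`(1 - s²) w^{(k+1)} + 2(α - k) s w^{(k)} + k(2α - k + 1) w^{(k-1)} = 0`, hence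
`w^{(2j+2)}(0) = -2(2j + 1)(α - j) w^{(2j)}(0)`. Against `Γ(n + (q-1)/2)` the factors `α - j`
cancel the top half of the Gamma product, which leaves the stated product.
-/

open MeasureTheory Real intervalIntegral

/-- The Legendre polynomial of degree `n` in dimension `q`, given by the Rodrigues formula
`P_n(q,s) = ((−1)^n Γ((q−1)/2) / (2^n Γ(n+(q−1)/2))) (1−s²)^{(3−q)/2}
            (d/ds)^n [(1−s²)^{n+(q−3)/2}]`. -/
noncomputable def legendreP (q n : ℕ) (s : ℝ) : ℝ :=
  ((-1 : ℝ) ^ n * Real.Gamma (((q : ℝ) - 1) / 2)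
      / (2 ^ n * Real.Gamma ((n : ℝ) + ((q : ℝ) - 1) / 2)))
    * (1 - s ^ 2) ^ (((3 : ℝ) - (q : ℝ)) / 2)
    * iteratedDeriv n (fun x : ℝ => (1 - x ^ 2) ^ ((n : ℝ) + ((q : ℝ) - 3) / 2)) s

open Filter Topology Set

theorem ContDiffOn.hasDerivAt_iteratedDeriv {𝕜 F : Type*} [NontriviallyNormedField 𝕜]
    [NormedAddCommGroup F] [NormedSpace 𝕜 F] {f : 𝕜 → F} {s : Set 𝕜} {x : 𝕜} {k : ℕ}
    (hf : ContDiffOn 𝕜 (k + 1) f s) (hs : IsOpen s) (hx : x ∈ s) :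
    HasDerivAt (iteratedDeriv k f) (iteratedDeriv (k + 1) f x) x := by
  have hwithin : DifferentiableAt 𝕜 (iteratedDerivWithin k f s) x :=
    (hf.differentiableOn_iteratedDerivWithin (by norm_cast; omega) hs.uniqueDiffOn x hx
      ).differentiableAt (hs.mem_nhds hx)
  have heq : iteratedDerivWithin k f s =ᶠ[𝓝 x] iteratedDeriv k f :=
    eventually_of_mem (hs.mem_nhds hx) fun y hy => iteratedDerivWithin_of_isOpen hs hy
  rw [iteratedDeriv_succ]
  exact (hwithin.congr_of_eventuallyEq heq.symm).hasDerivAt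

theorem iteratedDeriv_const_add_rpow (α c x : ℝ) (k : ℕ) :
    iteratedDeriv k (fun y => (c + y) ^ α) x
      = (descPochhammer ℝ k).eval α * (c + x) ^ (α - k) := by
  rw [iteratedDeriv_comp_const_add k (fun y => y ^ α), iteratedDeriv_eq_iterate]
  exact iter_deriv_rpow_const α (c + x) k

theorem iteratedDeriv_const_sub_rpow (α c x : ℝ) (k : ℕ) :
    iteratedDeriv k (fun y => (c - y) ^ α) x
      = (-1) ^ k * (descPochhammer ℝ k).eval α * (c - x) ^ (α - k) := by
  rw [iteratedDeriv_comp_const_sub k (fun y => y ^ α), iteratedDeriv_eq_iterate]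
  simp only [smul_eq_mul, iter_deriv_rpow_const, mul_assoc]

theorem Real.Gamma_add_nat_eq_prod_mul {x : ℝ} (hx : ∀ j : ℕ, x + j ≠ 0) (n : ℕ) :
    Gamma (x + n) = (∏ j ∈ Finset.range n, (x + j)) * Gamma x := by
  induction n with
  | zero => simp
  | succ n ih =>
    rw [Nat.cast_succ, ← add_assoc, Gamma_add_one (hx n), ih, Finset.prod_range_succ]
    ring

theorem Finset.prod_range_two_mul_add_one {M : Type*} [CommMonoid M] (f : ℕ → M) (m : ℕ) :
    ∏ j ∈ range (2 * m + 1), f j = (∏ j ∈ range (m + 1), f j) * ∏ j ∈ range m, f (2 * m - j) := by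
  rw [show 2 * m + 1 = (m + 1) + m by ring, prod_range_add,
    ← prod_range_reflect (fun j => f (m + 1 + j))]
  refine congrArg _ (prod_congr rfl fun j hj => congrArg f ?_)
  have := mem_range.mp hj
  omega

theorem uIoc_neg_one_zero_subset : uIoc (-1 : ℝ) 0 ⊆ Ioo (-1) 1 := by
  rw [uIoc_of_le (by norm_num)]
  exact fun x hx => ⟨hx.1, by linarith [hx.2]⟩

/-- Leibniz's expansion of `(d/dx)^n [(1 - x)^α (1 + x)^α]`. Unlike `iteratedDeriv` of
`(1 - x²)^α`, which is junk at `x = -1`, it is continuous there when `n ≤ α`. -/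
noncomputable def oneSubSqRpowDeriv (α : ℝ) (n : ℕ) (x : ℝ) : ℝ :=
  ∑ k ∈ Finset.range (n + 1),
    (n.choose k : ℝ) * ((-1) ^ k * (descPochhammer ℝ k).eval α * (1 - x) ^ (α - k))
      * ((descPochhammer ℝ (n - k)).eval α * (1 + x) ^ (α - (n - k : ℕ)))

section OneSubSqRpow

variable (α : ℝ)

theorem iteratedDeriv_one_sub_sq_rpow_eq (n : ℕ) {x : ℝ} (hx : x ∈ Ioo (-1) 1) :
    iteratedDeriv n (fun y => (1 - y ^ 2) ^ α) x = oneSubSqRpowDeriv α n x := by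
  have hsplit : (fun y : ℝ => (1 - y ^ 2) ^ α) =ᶠ[𝓝 x]
      (fun y => (1 - y) ^ α) * (fun y => (1 + y) ^ α) := by
    filter_upwards [Ioo_mem_nhds hx.1 hx.2] with y hy
    rw [Pi.mul_apply, ← mul_rpow (by linarith [hy.2]) (by linarith [hy.1])]
    ring_nf
  have h₁ : ContDiffAt ℝ n (fun y : ℝ => (1 - y) ^ α) x :=
    (contDiffAt_const.sub contDiffAt_id).rpow_const_of_ne (by simp; linarith [hx.2])
  have h₂ : ContDiffAt ℝ n (fun y : ℝ => (1 + y) ^ α) x :=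
    (contDiffAt_const.add contDiffAt_id).rpow_const_of_ne (by simp; linarith [hx.1])
  simp only [hsplit.iteratedDeriv_eq, iteratedDeriv_mul h₁ h₂, iteratedDeriv_const_sub_rpow,
    iteratedDeriv_const_add_rpow, oneSubSqRpowDeriv]

theorem contDiffOn_one_sub_sq_rpow (n : WithTop ℕ∞) :
    ContDiffOn ℝ n (fun y : ℝ => (1 - y ^ 2) ^ α) (Ioo (-1) 1) :=
  (contDiffOn_const.sub (contDiffOn_id.pow 2)).rpow_const_of_ne fun y hy => by
    simp only [id]; nlinarith [hy.1, hy.2]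

theorem hasDerivAt_iteratedDeriv_one_sub_sq_rpow (k : ℕ) {x : ℝ} (hx : x ∈ Ioo (-1) 1) :
    HasDerivAt (iteratedDeriv k fun y : ℝ => (1 - y ^ 2) ^ α)
      (iteratedDeriv (k + 1) (fun y : ℝ => (1 - y ^ 2) ^ α) x) x :=
  (contDiffOn_one_sub_sq_rpow α _).hasDerivAt_iteratedDeriv isOpen_Ioo hx

theorem one_sub_sq_mul_deriv_one_sub_sq_rpow {x : ℝ} (hx : x ∈ Ioo (-1) 1) :
    (1 - x ^ 2) * deriv (fun y : ℝ => (1 - y ^ 2) ^ α) x = -2 * α * x * (1 - x ^ 2) ^ α := by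
  have hpos : 0 < 1 - x ^ 2 := by nlinarith [hx.1, hx.2]
  rw [(((hasDerivAt_pow 2 x).const_sub 1).rpow_const (Or.inl hpos.ne')).deriv,
    rpow_sub_one hpos.ne']
  field_simp
  push_cast
  ring

/-- For `k = 0` the last term has coefficient `0`, so the truncated `k - 1` does no harm. -/
theorem iteratedDeriv_one_sub_sq_rpow_ode (k : ℕ) {x : ℝ} (hx : x ∈ Ioo (-1) 1) :
    (1 - x ^ 2) * iteratedDeriv (k + 1) (fun y : ℝ => (1 - y ^ 2) ^ α) x
      + 2 * (α - k) * x * iteratedDeriv k (fun y : ℝ => (1 - y ^ 2) ^ α) x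
      + k * (2 * α - k + 1) * iteratedDeriv (k - 1) (fun y : ℝ => (1 - y ^ 2) ^ α) x = 0 := by
  induction k generalizing x with
  | zero =>
    simp only [zero_add, iteratedDeriv_one, iteratedDeriv_zero, CharP.cast_eq_zero]
    linear_combination one_sub_sq_mul_deriv_one_sub_sq_rpow α hx
  | succ k ih =>
    set F := fun j => iteratedDeriv j (fun y : ℝ => (1 - y ^ 2) ^ α)
    have hF := fun j => hasDerivAt_iteratedDeriv_one_sub_sq_rpow α j hx
    have hderiv := ((((hasDerivAt_pow 2 x).const_sub 1).mul (hF (k + 1))).add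
      (((hasDerivAt_id x).const_mul (2 * (α - k))).mul (hF k))).add
      ((hF (k - 1)).const_mul (k * (2 * α - k + 1)))
    have hzero : HasDerivAt (fun y => (1 - y ^ 2) * F (k + 1) y + 2 * (α - k) * id y * F k y
        + k * (2 * α - k + 1) * F (k - 1) y) 0 x :=
      (hasDerivAt_const x 0).congr_of_eventuallyEq
        (eventually_of_mem (Ioo_mem_nhds hx.1 hx.2) fun y hy => ih hy)
    have hk : (k : ℝ) * (2 * α - k + 1) * F (k - 1 + 1) x = k * (2 * α - k + 1) * F k x := by
      rcases k with _ | k <;> simp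
    have := hderiv.unique hzero
    simp only [id, Nat.add_sub_cancel] at this ⊢
    push_cast
    linear_combination this - hk

theorem iteratedDeriv_two_mul_one_sub_sq_rpow_zero (m : ℕ) :
    iteratedDeriv (2 * m) (fun y : ℝ => (1 - y ^ 2) ^ α) 0
      = ∏ j ∈ Finset.range m, (-2 * (2 * j + 1) * (α - j)) := by
  induction m with
  | zero => simp
  | succ m ih =>
    have hode := iteratedDeriv_one_sub_sq_rpow_ode α (2 * m + 1) (x := 0)
      ⟨by norm_num, by norm_num⟩
    rw [Finset.prod_range_succ, ← ih, show 2 * (m + 1) = 2 * m + 1 + 1 by ring]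
    simp only [Nat.add_sub_cancel] at hode
    push_cast at hode
    linear_combination hode

end OneSubSqRpow

section Boundary

variable {α : ℝ} {n : ℕ}

theorem continuous_oneSubSqRpowDeriv (hn : (n : ℝ) ≤ α) : Continuous (oneSubSqRpowDeriv α n) := by
  refine continuous_finsetSum _ fun k hk => ?_
  have hk : (k : ℝ) ≤ n := by exact_mod_cast Nat.lt_succ_iff.mp (Finset.mem_range.mp hk)
  have hsub : ((n - k : ℕ) : ℝ) ≤ n := by exact_mod_cast Nat.sub_le n k
  have := continuous_rpow_const (show 0 ≤ α - k by linarith)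
  have := continuous_rpow_const (show 0 ≤ α - (n - k : ℕ) by linarith)
  fun_prop

theorem oneSubSqRpowDeriv_neg_one (hn : (n : ℝ) < α) : oneSubSqRpowDeriv α n (-1) = 0 := by
  refine Finset.sum_eq_zero fun k _ => ?_
  have hsub : ((n - k : ℕ) : ℝ) ≤ n := by exact_mod_cast Nat.sub_le n k
  rw [add_neg_cancel, zero_rpow (by linarith), mul_zero, mul_zero]

theorem intervalIntegrable_oneSubSqRpowDeriv (hn : (n : ℝ) < α + 1) :
    IntervalIntegrable (oneSubSqRpowDeriv α n) volume (-1) 0 := by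
  have hterm : ∀ k ∈ Finset.range (n + 1), IntervalIntegrable (fun x : ℝ =>
      (n.choose k : ℝ) * ((-1) ^ k * (descPochhammer ℝ k).eval α * (1 - x) ^ (α - k))
        * ((descPochhammer ℝ (n - k)).eval α * (1 + x) ^ (α - (n - k : ℕ)))) volume (-1) 0 := by
    intro k _
    have hsub : ((n - k : ℕ) : ℝ) ≤ n := by exact_mod_cast Nat.sub_le n k
    have hsing : IntervalIntegrable (fun y : ℝ => (1 + y) ^ (α - (n - k : ℕ))) volume (-1) 0 := by
      simpa [add_comm] using
        (intervalIntegrable_rpow' (by linarith) (a := 0) (b := 1)).comp_add_right 1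
    have hcont : ContinuousOn (fun y : ℝ => (n.choose k : ℝ)
        * ((-1) ^ k * (descPochhammer ℝ k).eval α * (1 - y) ^ (α - k))
        * (descPochhammer ℝ (n - k)).eval α) (uIcc (-1) 0) := by
      intro y hy
      rw [uIcc_of_le (show (-1 : ℝ) ≤ 0 by norm_num)] at hy
      have hpow : ContinuousAt (fun y : ℝ => (1 - y) ^ (α - k)) y :=
        (continuousAt_const.sub continuousAt_id).rpow_const
          (Or.inl (show (1 : ℝ) - y ≠ 0 by linarith [hy.2]))
      exact ((continuousAt_const.mul (continuousAt_const.mul hpow)).mul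
        continuousAt_const).continuousWithinAt
    simpa only [mul_assoc] using hsing.continuousOn_mul hcont
  have hsum : oneSubSqRpowDeriv α n = ∑ k ∈ Finset.range (n + 1), fun x =>
      (n.choose k : ℝ) * ((-1) ^ k * (descPochhammer ℝ k).eval α * (1 - x) ^ (α - k))
        * ((descPochhammer ℝ (n - k)).eval α * (1 + x) ^ (α - (n - k : ℕ))) := by
    ext x
    simp only [oneSubSqRpowDeriv, Finset.sum_apply]
  rw [hsum]
  exact IntervalIntegrable.sum _ hterm

theorem integral_iteratedDeriv_succ_one_sub_sq_rpow (hn : (n : ℝ) < α) :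
    ∫ s in (-1 : ℝ)..0, iteratedDeriv (n + 1) (fun y : ℝ => (1 - y ^ 2) ^ α) s
      = iteratedDeriv n (fun y : ℝ => (1 - y ^ 2) ^ α) 0 := by
  have hderiv : ∀ x ∈ Ioo (-1 : ℝ) 0, HasDerivAt (oneSubSqRpowDeriv α n)
      (iteratedDeriv (n + 1) (fun y : ℝ => (1 - y ^ 2) ^ α) x) x := fun x hx =>
    (hasDerivAt_iteratedDeriv_one_sub_sq_rpow α n ⟨hx.1, by linarith [hx.2]⟩
      ).congr_of_eventuallyEq
      (eventually_of_mem (Ioo_mem_nhds hx.1 (by linarith [hx.2] : x < 1)) fun y hy =>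
        (iteratedDeriv_one_sub_sq_rpow_eq α n hy).symm)
  have hint : IntervalIntegrable (iteratedDeriv (n + 1) (fun y : ℝ => (1 - y ^ 2) ^ α))
      volume (-1) 0 :=
    (intervalIntegrable_congr fun x hx =>
      iteratedDeriv_one_sub_sq_rpow_eq α (n + 1) (uIoc_neg_one_zero_subset hx)).mpr
      (intervalIntegrable_oneSubSqRpowDeriv (by push_cast; linarith))
  rw [integral_eq_sub_of_hasDeriv_right_of_le (by norm_num)
    (continuous_oneSubSqRpowDeriv hn.le).continuousOn (fun x hx => (hderiv x hx).hasDerivWithinAt)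
    hint, oneSubSqRpowDeriv_neg_one hn, sub_zero,
    iteratedDeriv_one_sub_sq_rpow_eq α n ⟨by norm_num, by norm_num⟩]

end Boundary

noncomputable def rodriguesConst (q n : ℕ) : ℝ :=
  (-1 : ℝ) ^ n * Gamma (((q : ℝ) - 1) / 2) / (2 ^ n * Gamma ((n : ℝ) + ((q : ℝ) - 1) / 2))

theorem legendreP_mul_weight (q n : ℕ) {s : ℝ} (hs : s ∈ Ioo (-1) 1) :
    legendreP q n s * (1 - s ^ 2) ^ (((q : ℝ) - 3) / 2)
      = rodriguesConst q n
        * iteratedDeriv n (fun x : ℝ => (1 - x ^ 2) ^ ((n : ℝ) + ((q : ℝ) - 3) / 2)) s := by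
  have hpos : 0 < 1 - s ^ 2 := by nlinarith [hs.1, hs.2]
  have hcancel : (1 - s ^ 2) ^ (((3 : ℝ) - q) / 2) * (1 - s ^ 2) ^ (((q : ℝ) - 3) / 2) = 1 := by
    rw [← rpow_add hpos, show ((3 : ℝ) - q) / 2 + ((q : ℝ) - 3) / 2 = 0 by ring, rpow_zero]
  calc legendreP q n s * (1 - s ^ 2) ^ (((q : ℝ) - 3) / 2)
      = rodriguesConst q n
        * ((1 - s ^ 2) ^ (((3 : ℝ) - q) / 2) * (1 - s ^ 2) ^ (((q : ℝ) - 3) / 2))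
        * iteratedDeriv n (fun x : ℝ => (1 - x ^ 2) ^ ((n : ℝ) + ((q : ℝ) - 3) / 2)) s := by
        rw [legendreP, rodriguesConst]
        ring
    _ = _ := by rw [hcancel, mul_one]

theorem rodriguesConst_odd_mul_prod {q : ℕ} (hq : 2 ≤ q) (m : ℕ) :
    rodriguesConst q (2 * m + 1)
      * ∏ j ∈ Finset.range m, (-2 * (2 * j + 1) * (((2 * m + 1 : ℕ) : ℝ) + ((q : ℝ) - 3) / 2 - j))
      = (-1) ^ m * ∏ i ∈ Finset.range (m + 1), ((2 * (i : ℝ) - 1) / (q + 2 * i - 1)) := by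
  set β := ((q : ℝ) - 1) / 2 with hβ
  have hβpos : 0 < β := by
    have : (2 : ℝ) ≤ q := by exact_mod_cast hq
    linarith
  have hlow : 0 < ∏ j ∈ Finset.range (m + 1), (β + j) :=
    Finset.prod_pos fun j _ => by positivity
  have hhigh : 0 < ∏ j ∈ Finset.range m, (β + (2 * m - j : ℕ)) :=
    Finset.prod_pos fun j _ => by positivity
  have hΓ : Gamma (((2 * m + 1 : ℕ) : ℝ) + β)
      = (∏ j ∈ Finset.range (m + 1), (β + j)) * (∏ j ∈ Finset.range m, (β + (2 * m - j : ℕ)))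
        * Gamma β := by
    rw [add_comm, Gamma_add_nat_eq_prod_mul (fun j => by positivity),
      Finset.prod_range_two_mul_add_one (fun j : ℕ => β + j)]
  have hshift : ∏ j ∈ Finset.range m, (((2 * m + 1 : ℕ) : ℝ) + ((q : ℝ) - 3) / 2 - j)
      = ∏ j ∈ Finset.range m, (β + (2 * m - j : ℕ)) := by
    refine Finset.prod_congr rfl fun j hj => ?_
    rw [Nat.cast_sub (by linarith [Finset.mem_range.mp hj])]
    push_cast
    ring
  have hodd : ∏ i ∈ Finset.range (m + 1), (2 * (i : ℝ) - 1)
      = -∏ j ∈ Finset.range m, (2 * (j : ℝ) + 1) := by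
    rw [Finset.prod_range_succ']
    norm_num [mul_add, add_sub_assoc]
  have hden : ∏ i ∈ Finset.range (m + 1), ((q : ℝ) + 2 * i - 1)
      = 2 ^ (m + 1) * ∏ j ∈ Finset.range (m + 1), (β + j) := by
    rw [Finset.pow_eq_prod_const, ← Finset.prod_mul_distrib]
    exact Finset.prod_congr rfl fun i _ => by rw [hβ]; ring
  have hΓpos := Gamma_pos_of_pos hβpos
  rw [rodriguesConst, (odd_two_mul_add_one m).neg_one_pow, Finset.prod_mul_distrib,
    Finset.prod_mul_distrib, hshift, Finset.prod_const, Finset.card_range,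
    Finset.prod_div_distrib, hodd, hden, hΓ, neg_pow 2 m]
  field_simp
  ring

/-- Odd-degree Legendre integral (Lemma 5.5): for `q ≥ 2` and `m ≥ 0`,
`∫_{−1}^0 P_{2m+1}(q,s) (1−s²)^{(q−3)/2} ds = (−1)^m ∏_{i=0}^m (2i−1)/(q+2i−1)`. -/
theorem integral_legendreP_odd
    (q : ℕ) (hq : 2 ≤ q) (m : ℕ) :
    ∫ s in (-1 : ℝ)..0, legendreP q (2 * m + 1) s * (1 - s ^ 2) ^ (((q : ℝ) - 3) / 2)
      = (-1 : ℝ) ^ m *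
          ∏ i ∈ Finset.range (m + 1), ((2 * (i : ℝ) - 1) / ((q : ℝ) + 2 * (i : ℝ) - 1)) := by
  have hα : ((2 * m : ℕ) : ℝ) < ((2 * m + 1 : ℕ) : ℝ) + ((q : ℝ) - 3) / 2 := by
    have : (2 : ℝ) ≤ q := by exact_mod_cast hq
    push_cast
    linarith
  rw [integral_congr_ae (Eventually.of_forall fun s hs =>
      legendreP_mul_weight q (2 * m + 1) (uIoc_neg_one_zero_subset hs)),
    intervalIntegral.integral_const_mul, integral_iteratedDeriv_succ_one_sub_sq_rpow hα,
    iteratedDeriv_two_mul_one_sub_sq_rpow_zero, rodriguesConst_odd_mul_prod hq]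
end

section
/- Let r be a real number and m ≥ 0 an integer. Then the (2m)-th iterated derivative of the function s ↦ (1 − s²)^r, evaluated at s = 0, equals (−1)^m · ((2m)! / m!) · ∏_{i=0}^{m−1} (r − i). -/
/-!
Write `f_r s = (1 - s²)^r`. Near `0` one has `f_r' s = -2 r s f_{r-1} s`, and Leibniz's rule
applied to `s * f_{r-1} s` at `s = 0` keeps only the term where `s` is differentiated once, so
`f_r^{(n+2)}(0) = -2 r (n + 1) f_{r-1}^{(n)}(0)`. Induction on `m`, with `r` varying, gives
the closed form.
-/

open Real Filter Topology

theorem iteratedDeriv_succ_id_mul_at_zero {𝕜 : Type*} [NontriviallyNormedField 𝕜]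
    {f : 𝕜 → 𝕜} {n : ℕ} (hf : ContDiffAt 𝕜 (n + 1) f 0) :
    iteratedDeriv (n + 1) (fun s => s * f s) 0 = (n + 1) * iteratedDeriv n f 0 := by
  rw [iteratedDeriv_fun_mul (f := fun s => s) contDiffAt_fun_id hf, Finset.sum_eq_single 1]
  · simp [iteratedDeriv_fun_id_zero]
  · intro i _ hi
    simp [iteratedDeriv_fun_id_zero, hi]
  · simp

theorem contDiffAt_one_sub_sq_rpow_zero (r : ℝ) (n : ℕ∞) :
    ContDiffAt ℝ n (fun s : ℝ => (1 - s ^ 2) ^ r) 0 :=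
  (contDiffAt_const.sub (contDiffAt_id.pow 2)).rpow_const_of_ne (by norm_num)

theorem hasDerivAt_one_sub_sq_rpow (r : ℝ) {s : ℝ} (hs : 1 - s ^ 2 ≠ 0) :
    HasDerivAt (fun s : ℝ => (1 - s ^ 2) ^ r) (-2 * r * (s * (1 - s ^ 2) ^ (r - 1))) s := by
  convert ((hasDerivAt_pow 2 s).const_sub 1).rpow_const (p := r) (Or.inl hs) using 1
  push_cast
  ring

theorem deriv_one_sub_sq_rpow_eventuallyEq (r : ℝ) :
    deriv (fun s : ℝ => (1 - s ^ 2) ^ r)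
      =ᶠ[𝓝 0] fun s => -2 * r * (s * (1 - s ^ 2) ^ (r - 1)) := by
  have hne : ∀ᶠ s : ℝ in 𝓝 0, 1 - s ^ 2 ≠ 0 :=
    (continuous_const.sub (continuous_pow 2)).continuousAt.eventually_ne (by norm_num)
  filter_upwards [hne] with s hs using (hasDerivAt_one_sub_sq_rpow r hs).deriv

theorem iteratedDeriv_add_two_one_sub_sq_rpow_at_zero (r : ℝ) (n : ℕ) :
    iteratedDeriv (n + 2) (fun s : ℝ => (1 - s ^ 2) ^ r) 0
      = -2 * r * (n + 1) * iteratedDeriv n (fun s : ℝ => (1 - s ^ 2) ^ (r - 1)) 0 := by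
  rw [iteratedDeriv_succ', (deriv_one_sub_sq_rpow_eventuallyEq r).iteratedDeriv_eq,
    iteratedDeriv_const_mul_field,
    iteratedDeriv_succ_id_mul_at_zero (contDiffAt_one_sub_sq_rpow_zero _ _)]
  ring

theorem prod_range_succ_sub_natCast (r : ℝ) (m : ℕ) :
    ∏ i ∈ Finset.range (m + 1), (r - (i : ℝ)) = r * ∏ i ∈ Finset.range m, (r - 1 - (i : ℝ)) := by
  rw [Finset.prod_range_succ', mul_comm]
  push_cast
  simp only [sub_zero, sub_add_eq_sub_sub_swap]

/-- Value at `0` of the `(2m)`-th derivative of `s ↦ (1−s²)^r`: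
`(d/ds)^{2m} (1−s²)^r |_{s=0} = (−1)^m ((2m)!/m!) ∏_{i=0}^{m−1} (r−i)`. -/
theorem iteratedDeriv_one_sub_sq_rpow_at_zero
    (r : ℝ) (m : ℕ) :
    iteratedDeriv (2 * m) (fun s : ℝ => (1 - s ^ 2) ^ r) 0
      = (-1 : ℝ) ^ m * ((Nat.factorial (2 * m) : ℝ) / (Nat.factorial m : ℝ))
          * ∏ i ∈ Finset.range m, (r - (i : ℝ)) := by
  induction m generalizing r with
  | zero => simp
  | succ m ih =>
    rw [show 2 * (m + 1) = 2 * m + 2 by ring, iteratedDeriv_add_two_one_sub_sq_rpow_at_zero,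
      ih, prod_range_succ_sub_natCast]
    push_cast [Nat.factorial_succ]
    field_simp
    ring
end
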